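/- arXiv:2506.10795 — 6 statements merged into one kernel-verified Lean document; each statement's English description precedes it below -/
import Mathlib

section
/- Let (n, n⊥, ν) be a positively oriented orthonormal basis of ℝ³ and let L : ℝ³ → ℝ³ be a linear map satisfying L ν = 0 and Lᵀ n = 0. Let w ∈ ℝ³ be the unique vector such that w × x = (L − Lᵀ) x for all x ∈ ℝ³ (twice the axial vector of the skew part of L). Then w = (n⊥ · Lᵀν) n − (n · Lᵀν) n⊥ + (n⊥ · L n) ν. -/
/-!
STATEMENT 1: Let (n, n⊥, ν) be a positively oriented orthonormal basis of ℝ³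
and L : ℝ³ → ℝ³ linear with L ν = 0 and Lᵀ n = 0.  Let w be the unique vector
with w × x = (L − Lᵀ) x for all x.  Then
w = (n⊥ · Lᵀν) n − (n · Lᵀν) n⊥ + (n⊥ · L n) ν.
-/

/-- Three-dimensional Euclidean space. -/
abbrev R3 : Type := Fin 3 → ℝ

/-- The standard dot product on ℝ³. -/
noncomputable def dot3 (a b : R3) : ℝ := a 0 * b 0 + a 1 * b 1 + a 2 * b 2

/-- The cross product on ℝ³. -/
noncomputable def cross3 (a b : R3) : R3 :=
  ![a 1 * b 2 - a 2 * b 1, a 2 * b 0 - a 0 * b 2, a 0 * b 1 - a 1 * b 0]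

theorem surface_curl_decomposition
    (n np ν : R3)
    (hnn : dot3 n n = 1) (hpp : dot3 np np = 1) (hnp : dot3 n np = 0)
    (hν : ν = cross3 n np)
    (L LT : R3 →ₗ[ℝ] R3)
    (hLT : ∀ x y : R3, dot3 (LT x) y = dot3 x (L y))
    (hLν : L ν = 0) (hLTn : LT n = 0)
    (w : R3)
    (hw : ∀ x : R3, cross3 w x = L x - LT x) :
    w = dot3 np (LT ν) • n - dot3 n (LT ν) • np + dot3 np (L n) • ν := by
  subst hν
  have hwv := hw (cross3 n np)
  rw [hLν] at hwv
  have hwn := hw n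
  rw [hLTn] at hwn
  have e0 := congrFun hwv 0
  have e1 := congrFun hwv 1
  have e2 := congrFun hwv 2
  have f0 := congrFun hwn 0
  have f1 := congrFun hwn 1
  have f2 := congrFun hwn 2
  simp only [cross3, dot3, Matrix.cons_val_zero, Matrix.cons_val_one, Matrix.head_cons,
    Matrix.cons_val_two, Matrix.tail_cons, Pi.sub_apply, Pi.zero_apply, zero_sub,
    sub_zero] at e0 e1 e2 f0 f1 f2 hnn hpp hnp ⊢
  funext i
  fin_cases i <;>
    simp only [cross3, dot3, Matrix.cons_val_zero, Matrix.cons_val_one, Matrix.head_cons,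
      Matrix.cons_val_two, Matrix.tail_cons, Pi.add_apply, Pi.sub_apply, Pi.smul_apply,
      smul_eq_mul, Fin.isValue, Fin.reduceFinMk]
  · linear_combination
      (-(w 0) * (np 0 * np 0 + np 1 * np 1 + np 2 * np 2)) * hnn + (-(w 0)) * hpp +
      (w 0 * (n 0 * np 0 + n 1 * np 1 + n 2 * np 2)) * hnp +
      (np 0 * n 0 - n 0 * np 0) * e0 + (np 0 * n 1 - n 0 * np 1) * e1 +
      (np 0 * n 2 - n 0 * np 2) * e2 +
      ((n 1 * np 2 - n 2 * np 1) * np 0) * f0 + ((n 1 * np 2 - n 2 * np 1) * np 1) * f1 +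
      ((n 1 * np 2 - n 2 * np 1) * np 2) * f2
  · linear_combination
      (-(w 1) * (np 0 * np 0 + np 1 * np 1 + np 2 * np 2)) * hnn + (-(w 1)) * hpp +
      (w 1 * (n 0 * np 0 + n 1 * np 1 + n 2 * np 2)) * hnp +
      (np 1 * n 0 - n 1 * np 0) * e0 + (np 1 * n 1 - n 1 * np 1) * e1 +
      (np 1 * n 2 - n 1 * np 2) * e2 +
      ((n 2 * np 0 - n 0 * np 2) * np 0) * f0 + ((n 2 * np 0 - n 0 * np 2) * np 1) * f1 +
      ((n 2 * np 0 - n 0 * np 2) * np 2) * f2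
  · linear_combination
      (-(w 2) * (np 0 * np 0 + np 1 * np 1 + np 2 * np 2)) * hnn + (-(w 2)) * hpp +
      (w 2 * (n 0 * np 0 + n 1 * np 1 + n 2 * np 2)) * hnp +
      (np 2 * n 0 - n 2 * np 0) * e0 + (np 2 * n 1 - n 2 * np 1) * e1 +
      (np 2 * n 2 - n 2 * np 2) * e2 +
      ((n 0 * np 1 - n 1 * np 0) * np 0) * f0 + ((n 0 * np 1 - n 1 * np 0) * np 1) * f1 +
      ((n 0 * np 1 - n 1 * np 0) * np 2) * f2
end

section
/- Let (n, n⊥, ν) be a positively oriented orthonormal basis of ℝ³ and let L : ℝ³ → ℝ³ be a linear map with L ν = 0 and Lᵀ n = 0. Set P(ν) := I − ν ⊗ ν, b⊥ := −n⊥ · (L n) and S := tr L. Then: (i) P(ν) L = −b⊥ · n⊥ ⊗ n + S · n⊥ ⊗ n⊥; (ii) L = P(ν) L + ν ⊗ (Lᵀ ν), i.e. L = −b⊥ · n⊥ ⊗ n + S · n⊥ ⊗ n⊥ + ν ⊗ (Lᵀ ν); (iii) tr(P(ν)L) = tr L, and the axial vector of the skew part of P(ν)L has zero component along n (the covariant twist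 vanishes). -/
/-- The orthogonal projection `P(ν) = I − ν ⊗ ν` onto the plane orthogonal
to `ν`, as a linear map. -/
noncomputable def proj3 (ν : R3) : R3 →ₗ[ℝ] R3 where
  toFun x := x - dot3 ν x • ν
  map_add' x y := by
    funext i
    simp only [dot3, Pi.add_apply, Pi.sub_apply, Pi.smul_apply, smul_eq_mul]
    ring
  map_smul' c x := by
    funext i
    simp only [dot3, Pi.smul_apply, Pi.sub_apply, smul_eq_mul, RingHom.id_apply]
    ring

section Aux

lemma dot3_comm (a b : R3) : dot3 a b = dot3 b a := by
  simp only [dot3]; ring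

lemma cross3_apply0 (a b : R3) : cross3 a b 0 = a 1 * b 2 - a 2 * b 1 := rfl
lemma cross3_apply1 (a b : R3) : cross3 a b 1 = a 2 * b 0 - a 0 * b 2 := rfl
lemma cross3_apply2 (a b : R3) : cross3 a b 2 = a 0 * b 1 - a 1 * b 0 := rfl

lemma dot3_cross_left (a b : R3) : dot3 a (cross3 a b) = 0 := by
  simp only [dot3, cross3_apply0, cross3_apply1, cross3_apply2]; ring

lemma dot3_cross_right (a b : R3) : dot3 b (cross3 a b) = 0 := by
  simp only [dot3, cross3_apply0, cross3_apply1, cross3_apply2]; ring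

lemma triple3 (a b c : R3) : dot3 a (cross3 b c) = dot3 (cross3 a b) c := by
  simp only [dot3, cross3_apply0, cross3_apply1, cross3_apply2]; ring

lemma proj3_apply (ν y : R3) (i : Fin 3) :
    proj3 ν y i = y i - dot3 ν y * ν i := rfl

lemma dot3_proj (ν a y : R3) :
    dot3 a (proj3 ν y) = dot3 a y - dot3 ν y * dot3 a ν := by
  have h : proj3 ν y = fun i => y i - dot3 ν y * ν i := rfl
  simp only [dot3, h]; ring

lemma completeness (n np : R3) (hnn : dot3 n n = 1) (hpp : dot3 np np = 1)
    (hnp : dot3 n np = 0) (i j : Fin 3) :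
    n i * n j + np i * np j + cross3 n np i * cross3 n np j
      = if i = j then 1 else 0 := by
  simp only [dot3] at hnn hpp hnp
  set ν := cross3 n np with hν
  have hν0 : ν 0 = n 1 * np 2 - n 2 * np 1 := rfl
  have hν1 : ν 1 = n 2 * np 0 - n 0 * np 2 := rfl
  have hν2 : ν 2 = n 0 * np 1 - n 1 * np 0 := rfl
  let M : Matrix (Fin 3) (Fin 3) ℝ := Matrix.of ![n, np, ν]
  have h1 : M * M.transpose = 1 := by
    ext a b
    rw [Matrix.mul_apply, Fin.sum_univ_three]
    fin_cases a <;> fin_cases b <;>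
      simp [M, hν0, hν1, hν2, Matrix.one_apply, Fin.ext_iff] <;>
      first
        | ring1
        | linear_combination hnn
        | linear_combination hpp
        | linear_combination hnp
        | linear_combination -hnp
        | linear_combination (np 0^2 + np 1^2 + np 2^2) * hnn + hpp
            - (n 0 * np 0 + n 1 * np 1 + n 2 * np 2) * hnp
  have h2 : M.transpose * M = 1 := mul_eq_one_comm.mp h1
  have h3 : (M.transpose * M) i j = (1 : Matrix (Fin 3) (Fin 3) ℝ) i j := by rw [h2]
  rw [Matrix.mul_apply, Fin.sum_univ_three] at h3
  simp only [Matrix.transpose_apply, Matrix.one_apply] at h3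
  have e0 : ∀ k, M 0 k = n k := fun _ => rfl
  have e1 : ∀ k, M 1 k = np k := fun _ => rfl
  have e2 : ∀ k, M 2 k = ν k := fun _ => rfl
  rw [e0, e0, e1, e1, e2, e2] at h3
  exact h3

lemma decomp (n np ν : R3) (hnn : dot3 n n = 1) (hpp : dot3 np np = 1)
    (hnp : dot3 n np = 0) (hν : ν = cross3 n np) (x : R3) (i : Fin 3) :
    x i = dot3 n x * n i + dot3 np x * np i + dot3 ν x * ν i := by
  subst hν
  have h0 := completeness n np hnn hpp hnp 0 i
  have h1 := completeness n np hnn hpp hnp 1 i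
  have h2 := completeness n np hnn hpp hnp 2 i
  have hxi : x 0 * (if (0:Fin 3) = i then (1:ℝ) else 0)
      + x 1 * (if (1:Fin 3) = i then (1:ℝ) else 0)
      + x 2 * (if (2:Fin 3) = i then (1:ℝ) else 0) = x i := by
    fin_cases i <;> simp
  rw [← h0, ← h1, ← h2] at hxi
  simp only [dot3]
  linear_combination -hxi

lemma dot3_single (a : R3) (j : Fin 3) : dot3 a (Pi.single j (1:ℝ)) = a j := by
  fin_cases j <;> simp [dot3, Pi.single_apply]

lemma trace3 (A : R3 →ₗ[ℝ] R3) :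
    LinearMap.trace ℝ R3 A
      = A (Pi.single 0 1) 0 + A (Pi.single 1 1) 1 + A (Pi.single 2 1) 2 := by
  rw [LinearMap.trace_eq_matrix_trace ℝ (Pi.basisFun ℝ (Fin 3)) A]
  simp [Matrix.trace, LinearMap.toMatrix_apply, Fin.sum_univ_three, Matrix.diag]

lemma trace_ortho (n np ν : R3) (hnn : dot3 n n = 1) (hpp : dot3 np np = 1)
    (hnp : dot3 n np = 0) (hν : ν = cross3 n np) (A : R3 →ₗ[ℝ] R3) :
    LinearMap.trace ℝ R3 A = dot3 n (A n) + dot3 np (A np) + dot3 ν (A ν) := by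
  have hsingle : ∀ j : Fin 3, (Pi.single j (1:ℝ) : R3) = n j • n + np j • np + ν j • ν := by
    intro j
    have hx : ∀ i, (Pi.single j (1:ℝ) : R3) i
        = dot3 n (Pi.single j 1) * n i + dot3 np (Pi.single j 1) * np i
          + dot3 ν (Pi.single j 1) * ν i :=
      decomp n np ν hnn hpp hnp hν _
    funext i
    simp only [Pi.add_apply, Pi.smul_apply, smul_eq_mul]
    rw [hx i, dot3_single, dot3_single, dot3_single]
  rw [trace3, hsingle 0, hsingle 1, hsingle 2]
  simp only [map_add, map_smul, Pi.add_apply, Pi.smul_apply, smul_eq_mul, dot3]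
  ring

end Aux

theorem covariant_gradient_decomposition
    (n np ν : R3)
    (hnn : dot3 n n = 1) (hpp : dot3 np np = 1) (hnp : dot3 n np = 0)
    (hν : ν = cross3 n np)
    (L LT : R3 →ₗ[ℝ] R3)
    (hLT : ∀ x y : R3, dot3 (LT x) y = dot3 x (L y))
    (hLν : L ν = 0) (hLTn : LT n = 0)
    (bperp S : ℝ)
    (hbperp : bperp = -(dot3 np (L n))) (hS : S = LinearMap.trace ℝ R3 L) :
    (∀ x : R3, (proj3 ν ∘ₗ L) x = (-bperp * dot3 n x) • np + (S * dot3 np x) • np) ∧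
    (∀ x : R3, L x = (proj3 ν ∘ₗ L) x + dot3 (LT ν) x • ν) ∧
    (∀ x : R3, L x = (-bperp * dot3 n x) • np + (S * dot3 np x) • np
        + dot3 (LT ν) x • ν) ∧
    LinearMap.trace ℝ R3 (proj3 ν ∘ₗ L) = LinearMap.trace ℝ R3 L ∧
    (∀ wc : R3, (∀ x : R3, cross3 wc x = (proj3 ν ∘ₗ L) x - (LT ∘ₗ proj3 ν) x) →
      dot3 wc n = 0) := by
  -- basic orthogonality facts
  have hnν : dot3 n ν = 0 := by rw [hν]; exact dot3_cross_left n np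
  have hpν : dot3 np ν = 0 := by rw [hν]; exact dot3_cross_right n np
  have hνn : dot3 ν n = 0 := by rw [dot3_comm]; exact hnν
  have hνp : dot3 ν np = 0 := by rw [dot3_comm]; exact hpν
  have hνν : dot3 ν ν = 1 := by
    simp only [dot3] at hnn hpp hnp ⊢
    rw [hν]
    simp only [cross3_apply0, cross3_apply1, cross3_apply2]
    linear_combination (np 0^2 + np 1^2 + np 2^2) * hnn + hpp
      - (n 0 * np 0 + n 1 * np 1 + n 2 * np 2) * hnp
  have hdot0 : ∀ a : R3, dot3 a (0 : R3) = 0 := by intro a; simp [dot3]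
  -- adjoint facts
  have hdotn : ∀ x : R3, dot3 n (L x) = 0 := by
    intro x; rw [← hLT, hLTn]; simp [dot3]
  have hdotν : ∀ x : R3, dot3 ν (L x) = dot3 (LT ν) x := fun x => (hLT ν x).symm
  -- decomposition of any vector
  have hdec := decomp n np ν hnn hpp hnp hν
  -- L x in terms of L n and L np
  have hLx : ∀ x : R3, L x = dot3 n x • L n + dot3 np x • L np := by
    intro x
    have hxv : x = dot3 n x • n + dot3 np x • np + dot3 ν x • ν := by
      funext i
      simp only [Pi.add_apply, Pi.smul_apply, smul_eq_mul]
      exact hdec x i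
    conv_lhs => rw [hxv]
    simp [map_add, map_smul, hLν]
  have hdot_comb : ∀ (a : ℝ) (u : R3) (b : ℝ) (v w : R3),
      dot3 w (a • u + b • v) = a * dot3 w u + b * dot3 w v := by
    intro a u b v w
    simp only [dot3, Pi.add_apply, Pi.smul_apply, smul_eq_mul]; ring
  -- trace value
  have hSval : S = dot3 np (L np) := by
    rw [hS, trace_ortho n np ν hnn hpp hnp hν L, hdotn n, hLν, hdot0]
    ring
  -- the key scalar identity
  have hcore : ∀ x : R3, dot3 np (L x) = -bperp * dot3 n x + S * dot3 np x := by
    intro x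
    rw [hLx x, hdot_comb, hbperp, hSval]; ring
  -- part (i)
  have part1 : ∀ x : R3,
      (proj3 ν ∘ₗ L) x = (-bperp * dot3 n x) • np + (S * dot3 np x) • np := by
    intro x
    funext i
    have hd := hdec (L x) i
    rw [hdotn x] at hd
    have hc := hcore x
    simp only [LinearMap.comp_apply, proj3_apply, Pi.add_apply, Pi.smul_apply,
      smul_eq_mul]
    linear_combination hd + np i * hc
  -- part (ii)
  have part2 : ∀ x : R3, L x = (proj3 ν ∘ₗ L) x + dot3 (LT ν) x • ν := by
    intro x
    funext i
    simp only [LinearMap.comp_apply, proj3_apply, Pi.add_apply, Pi.smul_apply,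
      smul_eq_mul]
    rw [← hdotν x]; ring
  refine ⟨part1, part2, ?_, ?_, ?_⟩
  · intro x
    rw [part2 x, part1 x]
  · -- trace equality
    rw [trace_ortho n np ν hnn hpp hnp hν (proj3 ν ∘ₗ L),
        trace_ortho n np ν hnn hpp hnp hν L]
    simp only [LinearMap.comp_apply]
    rw [dot3_proj, dot3_proj, dot3_proj, hLν, hnν, hpν]
    simp only [hdot0]
    ring
  · -- covariant twist vanishes
    intro wc hwc
    have hprojnp : proj3 ν np = np := by
      funext i
      rw [proj3_apply, hνp]; ring
    have h := hwc np
    simp only [LinearMap.comp_apply] at h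
    rw [hprojnp] at h
    have hn_eq : n = cross3 np ν := by
      have hpp' := hpp; have hnp' := hnp
      simp only [dot3] at hpp' hnp'
      funext i
      have hν0 : ν 0 = n 1 * np 2 - n 2 * np 1 := by rw [hν]; rfl
      have hν1 : ν 1 = n 2 * np 0 - n 0 * np 2 := by rw [hν]; rfl
      have hν2 : ν 2 = n 0 * np 1 - n 1 * np 0 := by rw [hν]; rfl
      fin_cases i
      · show n 0 = cross3 np ν 0
        rw [cross3_apply0, hν1, hν2]
        linear_combination np 0 * hnp' - n 0 * hpp'
      · show n 1 = cross3 np ν 1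
        rw [cross3_apply1, hν0, hν2]
        linear_combination np 1 * hnp' - n 1 * hpp'
      · show n 2 = cross3 np ν 2
        rw [cross3_apply2, hν0, hν1]
        linear_combination np 2 * hnp' - n 2 * hpp'
    have key : dot3 wc n = dot3 (cross3 wc np) ν := by
      rw [hn_eq, triple3]
    rw [key, h]
    have hsub : ∀ u v : R3, dot3 (u - v) ν = dot3 u ν - dot3 v ν := by
      intro u v; simp only [dot3, Pi.sub_apply]; ring
    rw [hsub]
    have h1 : dot3 (proj3 ν (L np)) ν = 0 := by
      rw [dot3_comm, dot3_proj, hνν, dot3_comm]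
      ring
    have h2 : dot3 (LT np) ν = 0 := by
      rw [hLT, hLν, hdot0]
    rw [h1, h2]; ring
end

section
/- Let U ⊆ ℝ² be open and r : U → ℝ³ a smooth isothermal parametrization of a regular surface: ∂_u r · ∂_v r = 0 and ‖∂_u r‖ = ‖∂_v r‖ = ρ(u,v) > 0 on U. Fix B ∈ ℝ, and let (u, v, α) : I → ℝ³ be a differentiable solution of the characteristic system u̇ = (cos α − B sin α)/ρ, v̇ = (sin α + B cos α)/ρ, α̇ = −(cos α − B sin α) c_u − (sin α + B cos α) c_v, where e_u := ∂_u r/ρ, e_v := ∂_v r/ρ, ν := e_u × e_v, c_u := (1/ρ) e_v · ∂_u e_u, c_v := (1/ρ) e_v · ∂_v e_u, all evaluated at (u(t), v(t)). Define the director along the curve n(t) := cos α(t) e_u + sin α(t) e_v. Then n is parallel transported (in Levi-Civita's sense) along the curve x(t) := r(u(t), v(t)): its covariant derivative vanishes, i.e. ṅ(t) · (ν(t) × n(t)) = 0 for all t ∈ I (and ṅ has no tangential component at all, since also ṅ · n = 0). -/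
/-- The Euclidean norm on ℝ³. -/
noncomputable def norm3 (a : R3) : ℝ := Real.sqrt (dot3 a a)

lemma dot3_smul_left (c : ℝ) (a b : R3) : dot3 (c • a) b = c * dot3 a b := by
  simp only [dot3, Pi.smul_apply, smul_eq_mul]; ring
lemma dot3_smul_right (c : ℝ) (a b : R3) : dot3 a (c • b) = c * dot3 a b := by
  simp only [dot3, Pi.smul_apply, smul_eq_mul]; ring
lemma dot3_add_left (a a' b : R3) : dot3 (a + a') b = dot3 a b + dot3 a' b := by
  simp only [dot3, Pi.add_apply]; ring
lemma dot3_add_right (a b b' : R3) : dot3 a (b + b') = dot3 a b + dot3 a b' := by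
  simp only [dot3, Pi.add_apply]; ring
lemma dot3_sub_right (a b b' : R3) : dot3 a (b - b') = dot3 a b - dot3 a b' := by
  simp only [dot3, Pi.sub_apply]; ring
lemma dot3_nonneg (a : R3) : 0 ≤ dot3 a a := by
  simp only [dot3]; nlinarith [mul_self_nonneg (a 0), mul_self_nonneg (a 1), mul_self_nonneg (a 2)]
lemma triple_cross (a b c : R3) : cross3 (cross3 a b) c = dot3 a c • b - dot3 b c • a := by
  funext i
  fin_cases i
  · show (cross3 (cross3 a b) c) 0 = (dot3 a c • b - dot3 b c • a) 0
    simp only [cross3, dot3, Pi.sub_apply, Pi.smul_apply, smul_eq_mul,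
      Matrix.cons_val_zero, Matrix.cons_val_one, Matrix.head_cons,
      Matrix.cons_val_two, Matrix.tail_cons]; ring
  · show (cross3 (cross3 a b) c) 1 = (dot3 a c • b - dot3 b c • a) 1
    simp only [cross3, dot3, Pi.sub_apply, Pi.smul_apply, smul_eq_mul,
      Matrix.cons_val_zero, Matrix.cons_val_one, Matrix.head_cons,
      Matrix.cons_val_two, Matrix.tail_cons]; ring
  · show (cross3 (cross3 a b) c) 2 = (dot3 a c • b - dot3 b c • a) 2
    simp only [cross3, dot3, Pi.sub_apply, Pi.smul_apply, smul_eq_mul,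
      Matrix.cons_val_zero, Matrix.cons_val_one, Matrix.head_cons,
      Matrix.cons_val_two, Matrix.tail_cons]; ring

lemma HasDerivAt.dot3comp {F G : ℝ → R3} {F' G' : R3} {t : ℝ}
    (hF : HasDerivAt F F' t) (hG : HasDerivAt G G' t) :
    HasDerivAt (fun s => dot3 (F s) (G s)) (dot3 F' (G t) + dot3 (F t) G') t := by
  have hFi := hasDerivAt_pi.mp hF
  have hGi := hasDerivAt_pi.mp hG
  have h : HasDerivAt (fun s => F s 0 * G s 0 + F s 1 * G s 1 + F s 2 * G s 2)
      ((F' 0 * G t 0 + F t 0 * G' 0) + (F' 1 * G t 1 + F t 1 * G' 1)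
        + (F' 2 * G t 2 + F t 2 * G' 2)) t :=
    (((hFi 0).mul (hGi 0)).add ((hFi 1).mul (hGi 1))).add ((hFi 2).mul (hGi 2))
  have e : dot3 F' (G t) + dot3 (F t) G'
      = (F' 0 * G t 0 + F t 0 * G' 0) + (F' 1 * G t 1 + F t 1 * G' 1)
        + (F' 2 * G t 2 + F t 2 * G' 2) := by simp only [dot3]; ring
  rw [e]; exact h

lemma DifferentiableAt.dot3comp {f g : ℝ × ℝ → R3} {p : ℝ × ℝ}
    (hf : DifferentiableAt ℝ f p) (hg : DifferentiableAt ℝ g p) :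
    DifferentiableAt ℝ (fun q => dot3 (f q) (g q)) p := by
  have hfi := differentiableAt_pi.mp hf
  have hgi := differentiableAt_pi.mp hg
  exact (((hfi 0).mul (hgi 0)).add ((hfi 1).mul (hgi 1))).add ((hfi 2).mul (hgi 2))

lemma chainDeriv {E : Type*} [NormedAddCommGroup E] [NormedSpace ℝ E]
    {f : ℝ × ℝ → E} {u v : ℝ → ℝ} {u' v' : ℝ} {t : ℝ}
    (hf : DifferentiableAt ℝ f (u t, v t))
    (hu : HasDerivAt u u' t) (hv : HasDerivAt v v' t) :
    HasDerivAt (fun s => f (u s, v s))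
      (u' • fderiv ℝ f (u t, v t) (1, 0) + v' • fderiv ℝ f (u t, v t) (0, 1)) t := by
  have hp : HasDerivAt (fun s => (u s, v s)) (u', v') t := hu.prodMk hv
  have h := hf.hasFDerivAt.comp_hasDerivAt t hp
  have e : (u', v') = u' • ((1:ℝ), (0:ℝ)) + v' • ((0:ℝ), (1:ℝ)) := by simp
  have e2 : fderiv ℝ f (u t, v t) (u', v')
      = u' • fderiv ℝ f (u t, v t) (1, 0) + v' • fderiv ℝ f (u t, v t) (0, 1) := by
    rw [e, map_add, map_smul, map_smul]
  rw [← e2]; exact h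

lemma frame_diffAt {U : Set (ℝ × ℝ)} (hU : IsOpen U) {r : ℝ × ℝ → R3} {ρ : ℝ × ℝ → ℝ}
    (hr : ContDiffOn ℝ (⊤ : ℕ∞) r U) (hρpos : ∀ p ∈ U, 0 < ρ p) (w : ℝ × ℝ)
    (hnorm : ∀ p ∈ U, norm3 (fderiv ℝ r p w) = ρ p)
    {e : ℝ × ℝ → R3} (he : ∀ p, e p = (ρ p)⁻¹ • fderiv ℝ r p w)
    {P : ℝ × ℝ} (hP : P ∈ U) : DifferentiableAt ℝ e P := by
  have hfd : ContDiffOn ℝ (⊤ : ℕ∞) (fun p => fderiv ℝ r p) U := hr.fderiv_of_isOpen hU (by simp)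
  have hgc : ContDiffOn ℝ (⊤ : ℕ∞) (fun p => fderiv ℝ r p w) U := hfd.clm_apply contDiffOn_const
  have hgd : DifferentiableAt ℝ (fun p => fderiv ℝ r p w) P :=
    (hgc.differentiableOn (by simp)).differentiableAt (hU.mem_nhds hP)
  have hQd : DifferentiableAt ℝ (fun p => dot3 (fderiv ℝ r p w) (fderiv ℝ r p w)) P :=
    hgd.dot3comp hgd
  have hρP := hρpos P hP
  have hQne : dot3 (fderiv ℝ r P w) (fderiv ℝ r P w) ≠ 0 := by
    intro h0
    have h1 : Real.sqrt (dot3 (fderiv ℝ r P w) (fderiv ℝ r P w)) = ρ P := hnorm P hP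
    rw [h0, Real.sqrt_zero] at h1
    exact absurd h1.symm (ne_of_gt hρP)
  have hσd : DifferentiableAt ℝ
      (fun p => Real.sqrt (dot3 (fderiv ℝ r p w) (fderiv ℝ r p w))) P := hQd.sqrt hQne
  have hσne : Real.sqrt (dot3 (fderiv ℝ r P w) (fderiv ℝ r P w)) ≠ 0 := by
    have h1 : Real.sqrt (dot3 (fderiv ℝ r P w) (fderiv ℝ r P w)) = ρ P := hnorm P hP
    rw [h1]; exact ne_of_gt hρP
  have hd : DifferentiableAt ℝ
      (fun p => (Real.sqrt (dot3 (fderiv ℝ r p w) (fderiv ℝ r p w)))⁻¹ • fderiv ℝ r p w) P :=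
    (hσd.inv hσne).smul hgd
  apply hd.congr_of_eventuallyEq
  filter_upwards [hU.mem_nhds hP] with p hp
  have hs : Real.sqrt (dot3 (fderiv ℝ r p w) (fderiv ℝ r p w)) = ρ p := hnorm p hp
  rw [he p, hs]

open Topology Filter in
theorem characteristic_parallel_transport
    (U : Set (ℝ × ℝ)) (hU : IsOpen U)
    (r : ℝ × ℝ → R3) (ρ : ℝ × ℝ → ℝ)
    (hr : ContDiffOn ℝ (⊤ : ℕ∞) r U)
    (hρpos : ∀ p ∈ U, 0 < ρ p)
    (hiso : ∀ p ∈ U, dot3 (fderiv ℝ r p (1, 0)) (fderiv ℝ r p (0, 1)) = 0)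
    (hnu : ∀ p ∈ U, norm3 (fderiv ℝ r p (1, 0)) = ρ p)
    (hnv : ∀ p ∈ U, norm3 (fderiv ℝ r p (0, 1)) = ρ p)
    (eu ev νs : ℝ × ℝ → R3) (cu cv : ℝ × ℝ → ℝ)
    (heu : ∀ p, eu p = (ρ p)⁻¹ • fderiv ℝ r p (1, 0))
    (hev : ∀ p, ev p = (ρ p)⁻¹ • fderiv ℝ r p (0, 1))
    (hνs : ∀ p, νs p = cross3 (eu p) (ev p))
    (hcu : ∀ p, cu p = (ρ p)⁻¹ * dot3 (ev p) (fderiv ℝ eu p (1, 0)))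
    (hcv : ∀ p, cv p = (ρ p)⁻¹ * dot3 (ev p) (fderiv ℝ eu p (0, 1)))
    (B : ℝ) (I : Set ℝ) (u v α : ℝ → ℝ)
    (hmem : ∀ t ∈ I, (u t, v t) ∈ U)
    (hu : ∀ t ∈ I, HasDerivAt u
      ((Real.cos (α t) - B * Real.sin (α t)) / ρ (u t, v t)) t)
    (hv : ∀ t ∈ I, HasDerivAt v
      ((Real.sin (α t) + B * Real.cos (α t)) / ρ (u t, v t)) t)
    (hα : ∀ t ∈ I, HasDerivAt α
      (-(Real.cos (α t) - B * Real.sin (α t)) * cu (u t, v t)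
        - (Real.sin (α t) + B * Real.cos (α t)) * cv (u t, v t)) t)
    (x : ℝ → R3) (hx : ∀ s, x s = r (u s, v s))
    (n : ℝ → R3)
    (hn : ∀ s, n s = Real.cos (α s) • eu (u s, v s) + Real.sin (α s) • ev (u s, v s)) :
    ∀ t ∈ I, dot3 (deriv n t) (cross3 (νs (u t, v t)) (n t)) = 0 ∧
      dot3 (deriv n t) (n t) = 0 := by
  intro t ht
  have hPU : (u t, v t) ∈ U := hmem t ht
  have hρP : 0 < ρ (u t, v t) := hρpos _ hPU
  have hρne : ρ (u t, v t) ≠ 0 := ne_of_gt hρP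
  have hut := hu t ht
  have hvt := hv t ht
  have hat := hα t ht
  -- differentiability of the frame
  have heud : DifferentiableAt ℝ eu (u t, v t) := frame_diffAt hU hr hρpos (1, 0) hnu heu hPU
  have hevd : DifferentiableAt ℝ ev (u t, v t) := frame_diffAt hU hr hρpos (0, 1) hnv hev hPU
  have hEu := chainDeriv heud hut hvt
  have hEv := chainDeriv hevd hut hvt
  set u' : ℝ := (Real.cos (α t) - B * Real.sin (α t)) / ρ (u t, v t) with hu'
  set v' : ℝ := (Real.sin (α t) + B * Real.cos (α t)) / ρ (u t, v t) with hv'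
  set a' : ℝ := -(Real.cos (α t) - B * Real.sin (α t)) * cu (u t, v t)
      - (Real.sin (α t) + B * Real.cos (α t)) * cv (u t, v t) with ha'
  set Eu' : R3 := u' • fderiv ℝ eu (u t, v t) (1, 0) + v' • fderiv ℝ eu (u t, v t) (0, 1)
    with hEu'd
  set Ev' : R3 := u' • fderiv ℝ ev (u t, v t) (1, 0) + v' • fderiv ℝ ev (u t, v t) (0, 1)
    with hEv'd
  -- orthonormality of the frame on U
  have hsq1 : ∀ p ∈ U, dot3 (fderiv ℝ r p (1, 0)) (fderiv ℝ r p (1, 0)) = ρ p ^ 2 := by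
    intro p hp
    rw [← hnu p hp, norm3, Real.sq_sqrt (dot3_nonneg _)]
  have hsq2 : ∀ p ∈ U, dot3 (fderiv ℝ r p (0, 1)) (fderiv ℝ r p (0, 1)) = ρ p ^ 2 := by
    intro p hp
    rw [← hnv p hp, norm3, Real.sq_sqrt (dot3_nonneg _)]
  have hee : ∀ p ∈ U, dot3 (eu p) (eu p) = 1 := by
    intro p hp
    rw [heu p, dot3_smul_left, dot3_smul_right, hsq1 p hp, sq]
    field_simp
    exact div_self (ne_of_gt (hρpos p hp))
  have hvv : ∀ p ∈ U, dot3 (ev p) (ev p) = 1 := by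
    intro p hp
    rw [hev p, dot3_smul_left, dot3_smul_right, hsq2 p hp, sq]
    field_simp
    exact div_self (ne_of_gt (hρpos p hp))
  have hev0 : ∀ p ∈ U, dot3 (eu p) (ev p) = 0 := by
    intro p hp
    rw [heu p, hev p, dot3_smul_left, dot3_smul_right, hiso p hp]
    ring
  have hev0' : dot3 (ev (u t, v t)) (eu (u t, v t)) = 0 := by
    rw [dot3_comm]; exact hev0 _ hPU
  -- the curve stays in U near t
  have hcont : ContinuousAt (fun s => (u s, v s)) t := (hut.prodMk hvt).continuousAt
  have hevU : ∀ᶠ s in 𝓝 t, (u s, v s) ∈ U := hcont.preimage_mem_nhds (hU.mem_nhds hPU)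
  -- derivatives of the orthonormality relations along the curve
  have huu' : dot3 Eu' (eu (u t, v t)) = 0 := by
    have hD := hEu.dot3comp hEu
    have hone : (fun s => dot3 (eu (u s, v s)) (eu (u s, v s))) =ᶠ[𝓝 t] fun _ => (1 : ℝ) := by
      filter_upwards [hevU] with s hs using hee _ hs
    have h0 := (hone.hasDerivAt_iff.mp hD).unique (hasDerivAt_const t 1)
    have hc := dot3_comm (eu (u t, v t)) Eu'
    linarith
  have hvv' : dot3 Ev' (ev (u t, v t)) = 0 := by
    have hD := hEv.dot3comp hEv
    have hone : (fun s => dot3 (ev (u s, v s)) (ev (u s, v s))) =ᶠ[𝓝 t] fun _ => (1 : ℝ) := by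
      filter_upwards [hevU] with s hs using hvv _ hs
    have h0 := (hone.hasDerivAt_iff.mp hD).unique (hasDerivAt_const t 1)
    have hc := dot3_comm (ev (u t, v t)) Ev'
    linarith
  have hmix : dot3 Eu' (ev (u t, v t)) + dot3 (eu (u t, v t)) Ev' = 0 := by
    have hD := hEu.dot3comp hEv
    have hone : (fun s => dot3 (eu (u s, v s)) (ev (u s, v s))) =ᶠ[𝓝 t] fun _ => (0 : ℝ) := by
      filter_upwards [hevU] with s hs using hev0 _ hs
    exact (hone.hasDerivAt_iff.mp hD).unique (hasDerivAt_const t 0)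
  -- identify dot3 Eu' (ev P) with the spin connection
  have hDuev : dot3 (fderiv ℝ eu (u t, v t) (1, 0)) (ev (u t, v t))
      = ρ (u t, v t) * cu (u t, v t) := by
    rw [dot3_comm, hcu (u t, v t)]
    field_simp
  have hDvev : dot3 (fderiv ℝ eu (u t, v t) (0, 1)) (ev (u t, v t))
      = ρ (u t, v t) * cv (u t, v t) := by
    rw [dot3_comm, hcv (u t, v t)]
    field_simp
  have hEuev : dot3 Eu' (ev (u t, v t)) = -a' := by
    rw [hEu'd, dot3_add_left, dot3_smul_left, dot3_smul_left, hDuev, hDvev, hu', hv', ha']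
    field_simp
    ring
  have hEveu : dot3 Ev' (eu (u t, v t)) = a' := by
    have hc := dot3_comm (eu (u t, v t)) Ev'
    linarith [hmix, hEuev]
  -- derivative of the director
  have hcos : HasDerivAt (fun s => Real.cos (α s)) (-Real.sin (α t) * a') t := hat.cos
  have hsin : HasDerivAt (fun s => Real.sin (α s)) (Real.cos (α t) * a') t := hat.sin
  have hn' : HasDerivAt n
      ((Real.cos (α t) • Eu' + (-Real.sin (α t) * a') • eu (u t, v t))
        + (Real.sin (α t) • Ev' + (Real.cos (α t) * a') • ev (u t, v t))) t := by
    have h1 := hcos.smul hEu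
    have h2 := hsin.smul hEv
    exact (h1.add h2).congr_of_eventuallyEq (Filter.Eventually.of_forall hn)
  have hder := hn'.deriv
  have hnt : n t = Real.cos (α t) • eu (u t, v t) + Real.sin (α t) • ev (u t, v t) := hn t
  have hmm : cross3 (νs (u t, v t)) (n t)
      = Real.cos (α t) • ev (u t, v t) - Real.sin (α t) • eu (u t, v t) := by
    rw [hνs (u t, v t), hnt, triple_cross]
    simp only [dot3_add_right, dot3_smul_right, hee _ hPU, hvv _ hPU, hev0 _ hPU, hev0',
      mul_one, mul_zero, add_zero, zero_add]
  constructor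
  · rw [hder, hmm]
    simp only [dot3_add_left, dot3_smul_left, dot3_sub_right, dot3_smul_right,
      huu', hvv', hEuev, hEveu, hee _ hPU, hvv _ hPU, hev0 _ hPU, hev0']
    ring
  · rw [hder, hnt]
    simp only [dot3_add_left, dot3_smul_left, dot3_add_right, dot3_smul_right,
      huu', hvv', hEuev, hEveu, hee _ hPU, hvv _ hPU, hev0 _ hPU, hev0']
    ring
end

section
/- Fix B ∈ ℝ and let α : J → ℝ be differentiable on an interval J ⊆ (0, π), with cos α(φ) − B sin α(φ) ≠ 0 and α'(φ) = −((sin α(φ) + B cos α(φ))/(cos α(φ) − B sin α(φ))) · cot φ for all φ ∈ J. Then the function φ ↦ sin φ · (sin α(φ) + B cos α(φ)) is constant on J. -/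
/-!
With `g a = sin a + B cos a` one has `g' a = cos a - B sin a`, so the ODE says exactly
`g'(α) α' = -g(α) cot φ`. Hence `d/dφ (sin φ · g(α φ)) = cos φ · g(α) + sin φ · g'(α) α' = 0`,
and a function with vanishing derivative on an interval is constant there.
-/

open Real

theorem Convex.eq_of_forall_hasDerivWithinAt_zero {E : Type*} [NormedAddCommGroup E]
    [NormedSpace ℝ E] {s : Set ℝ} {f : ℝ → E} (hs : Convex ℝ s)
    (hf : ∀ x ∈ s, HasDerivWithinAt f 0 s x) {x y : ℝ} (hx : x ∈ s) (hy : y ∈ s) :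
    f x = f y := by
  have h := hs.norm_image_sub_le_of_norm_hasDerivWithin_le (C := 0) hf (fun _ _ => by simp) hy hx
  rw [zero_mul, norm_le_zero_iff, sub_eq_zero] at h
  exact h

theorem hasDerivAt_sin_add_mul_cos (B a : ℝ) :
    HasDerivAt (fun a => sin a + B * cos a) (cos a - B * sin a) a := by
  refine ((hasDerivAt_sin a).add ((hasDerivAt_cos a).const_mul B)).congr_deriv ?_
  ring

theorem hasDerivAt_sin_mul_comp_eq_zero {g g' α : ℝ → ℝ} {φ : ℝ}
    (hg : HasDerivAt g (g' (α φ)) (α φ)) (hg' : g' (α φ) ≠ 0) (hsin : sin φ ≠ 0)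
    (hα : HasDerivAt α (-(g (α φ) / g' (α φ)) * (cos φ / sin φ)) φ) :
    HasDerivAt (fun φ => sin φ * g (α φ)) 0 φ := by
  refine ((hasDerivAt_sin φ).mul (hg.comp φ hα)).congr_deriv ?_
  simp only [Function.comp_apply]
  field_simp
  ring

theorem sphere_characteristic_first_integral
    (B : ℝ) (J : Set ℝ) (hJ : J ⊆ Set.Ioo 0 Real.pi) (hJc : Convex ℝ J)
    (α : ℝ → ℝ)
    (hden : ∀ φ ∈ J, Real.cos (α φ) - B * Real.sin (α φ) ≠ 0)
    (hode : ∀ φ ∈ J, HasDerivAt α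
      (-((Real.sin (α φ) + B * Real.cos (α φ)) /
          (Real.cos (α φ) - B * Real.sin (α φ))) * (Real.cos φ / Real.sin φ)) φ) :
    ∀ φ₁ ∈ J, ∀ φ₂ ∈ J,
      Real.sin φ₁ * (Real.sin (α φ₁) + B * Real.cos (α φ₁))
        = Real.sin φ₂ * (Real.sin (α φ₂) + B * Real.cos (α φ₂)) := by
  intro φ₁ h₁ φ₂ h₂
  refine hJc.eq_of_forall_hasDerivWithinAt_zero
    (f := fun φ => sin φ * (sin (α φ) + B * cos (α φ))) (fun φ hφ => ?_) h₁ h₂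
  have hsin : sin φ ≠ 0 := (sin_pos_of_pos_of_lt_pi (hJ hφ).1 (hJ hφ).2).ne'
  exact (hasDerivAt_sin_mul_comp_eq_zero (g' := fun a => cos a - B * sin a)
    (hasDerivAt_sin_add_mul_cos B (α φ)) (hden φ hφ) hsin (hode φ hφ)).hasDerivWithinAt
end

section
/- Let I ⊆ ℝ be an open interval, ψ, φ : I → ℝ smooth with ψ > 0 and ψ'² + φ'² > 0 on I, and let r : ℝ × I → ℝ³ be the surface of revolution r(u,v) = (ψ(v) cos u, ψ(v) sin u, φ(v)). Define ν(u,v) := (φ'(v) cos u, φ'(v) sin u, −ψ'(v)) / √(ψ'(v)² + φ'(v)²). Then ν is a unit normal to the surface, and ∂_u ν × ∂_v ν = K(v) · (∂_u r × ∂_v r), where K(v) = −(φ'/(ψ (ψ'² + φ'²)^{3/2})) · [φ' · (ψ'/√(ψ'² + φ'²))' − ψ' · (φ'/√(ψ'² + φ'²))'] is the Gaussian curvature of the surface of revolution. -/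
theorem rev_fderiv (c1 c2 c3 : ℝ → ℝ) (u v d1 d2 d3 : ℝ)
    (h1 : HasDerivAt c1 d1 v) (h2 : HasDerivAt c2 d2 v) (h3 : HasDerivAt c3 d3 v)
    (F : ℝ × ℝ → R3)
    (hF : ∀ q : ℝ × ℝ, F q = ![c1 q.2 * Real.cos q.1, c2 q.2 * Real.sin q.1, c3 q.2]) :
    fderiv ℝ F (u, v) (1, 0) = ![-(c1 v * Real.sin u), c2 v * Real.cos u, 0] ∧
    fderiv ℝ F (u, v) (0, 1) = ![d1 * Real.cos u, d2 * Real.sin u, d3] := by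
  have hFe : F = fun q : ℝ × ℝ => (![c1 q.2 * Real.cos q.1, c2 q.2 * Real.sin q.1, c3 q.2] : R3) :=
    funext hF
  subst hFe
  have hc1 : HasFDerivAt (fun q : ℝ × ℝ => c1 q.2)
      (d1 • ContinuousLinearMap.snd ℝ ℝ ℝ) (u, v) :=
    h1.comp_hasFDerivAt (u, v) hasFDerivAt_snd
  have hc2 : HasFDerivAt (fun q : ℝ × ℝ => c2 q.2)
      (d2 • ContinuousLinearMap.snd ℝ ℝ ℝ) (u, v) :=
    h2.comp_hasFDerivAt (u, v) hasFDerivAt_snd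
  have hc3 : HasFDerivAt (fun q : ℝ × ℝ => c3 q.2)
      (d3 • ContinuousLinearMap.snd ℝ ℝ ℝ) (u, v) :=
    h3.comp_hasFDerivAt (u, v) hasFDerivAt_snd
  have hcos : HasFDerivAt (fun q : ℝ × ℝ => Real.cos q.1)
      ((-Real.sin u) • ContinuousLinearMap.fst ℝ ℝ ℝ) (u, v) :=
    (Real.hasDerivAt_cos u).comp_hasFDerivAt (f := Prod.fst) (u, v) hasFDerivAt_fst
  have hsin : HasFDerivAt (fun q : ℝ × ℝ => Real.sin q.1)
      (Real.cos u • ContinuousLinearMap.fst ℝ ℝ ℝ) (u, v) :=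
    (Real.hasDerivAt_sin u).comp_hasFDerivAt (f := Prod.fst) (u, v) hasFDerivAt_fst
  have H1 := hc1.mul hcos
  have H2 := hc2.mul hsin
  set L : Fin 3 → (ℝ × ℝ →L[ℝ] ℝ) :=
    ![c1 v • ((-Real.sin u) • ContinuousLinearMap.fst ℝ ℝ ℝ) +
        Real.cos u • (d1 • ContinuousLinearMap.snd ℝ ℝ ℝ),
      c2 v • (Real.cos u • ContinuousLinearMap.fst ℝ ℝ ℝ) +
        Real.sin u • (d2 • ContinuousLinearMap.snd ℝ ℝ ℝ),
      d3 • ContinuousLinearMap.snd ℝ ℝ ℝ] with hL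
  have H : HasFDerivAt
      (fun q : ℝ × ℝ => (![c1 q.2 * Real.cos q.1, c2 q.2 * Real.sin q.1, c3 q.2] : R3))
      (ContinuousLinearMap.pi L) (u, v) := by
    apply hasFDerivAt_pi''
    intro i
    fin_cases i <;>
      simp only [hL, ContinuousLinearMap.proj_pi, Matrix.cons_val_zero, Matrix.cons_val_one,
        Matrix.head_cons, Matrix.cons_val_two, Matrix.tail_cons, Fin.isValue] <;>
    first
      | exact H1
      | exact H2
      | exact hc3
  rw [H.fderiv]
  constructor <;> funext i <;> fin_cases i <;>
    simp [hL, ContinuousLinearMap.pi_apply] <;> ring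

theorem revolution_gaussian_curvature
    (I : Set ℝ) (hI : IsOpen I) (hIconn : Convex ℝ I)
    (ψ φ : ℝ → ℝ)
    (hψ : ContDiffOn ℝ (⊤ : ℕ∞) ψ I) (hφ : ContDiffOn ℝ (⊤ : ℕ∞) φ I)
    (hψpos : ∀ v ∈ I, 0 < ψ v)
    (hreg : ∀ v ∈ I, 0 < (deriv ψ v) ^ 2 + (deriv φ v) ^ 2)
    (r ν : ℝ × ℝ → R3) (K : ℝ → ℝ)
    (hr : ∀ p : ℝ × ℝ, r p = ![ψ p.2 * Real.cos p.1, ψ p.2 * Real.sin p.1, φ p.2])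
    (hν : ∀ p : ℝ × ℝ, ν p =
      (Real.sqrt ((deriv ψ p.2) ^ 2 + (deriv φ p.2) ^ 2))⁻¹ •
        ![deriv φ p.2 * Real.cos p.1, deriv φ p.2 * Real.sin p.1, -deriv ψ p.2])
    (hK : ∀ v : ℝ, K v =
      -(deriv φ v /
          (ψ v * (Real.sqrt ((deriv ψ v) ^ 2 + (deriv φ v) ^ 2)) ^ 3)) *
        (deriv φ v *
            deriv (fun w => deriv ψ w /
              Real.sqrt ((deriv ψ w) ^ 2 + (deriv φ w) ^ 2)) v
          - deriv ψ v *
            deriv (fun w => deriv φ w /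
              Real.sqrt ((deriv ψ w) ^ 2 + (deriv φ w) ^ 2)) v)) :
    ∀ p : ℝ × ℝ, p.2 ∈ I →
      dot3 (ν p) (fderiv ℝ r p (1, 0)) = 0 ∧
      dot3 (ν p) (fderiv ℝ r p (0, 1)) = 0 ∧
      norm3 (ν p) = 1 ∧
      cross3 (fderiv ℝ ν p (1, 0)) (fderiv ℝ ν p (0, 1)) =
        K p.2 • cross3 (fderiv ℝ r p (1, 0)) (fderiv ℝ r p (0, 1)) := by
  rintro ⟨u, v⟩ hp
  simp only at hp ⊢
  have hIv : I ∈ nhds v := hI.mem_nhds hp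
  -- basic differentiability facts
  have hψv : HasDerivAt ψ (deriv ψ v) v :=
    (((hψ.contDiffAt hIv).differentiableAt (by simp))).hasDerivAt
  have hφv : HasDerivAt φ (deriv φ v) v :=
    (((hφ.contDiffAt hIv).differentiableAt (by simp))).hasDerivAt
  have hψ1 : ContDiffOn ℝ (⊤ : ℕ∞) (deriv ψ) I := hψ.deriv_of_isOpen hI (by simp)
  have hφ1 : ContDiffOn ℝ (⊤ : ℕ∞) (deriv φ) I := hφ.deriv_of_isOpen hI (by simp)
  set A : ℝ → ℝ := fun w => deriv φ w / Real.sqrt ((deriv ψ w) ^ 2 + (deriv φ w) ^ 2)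
    with hAdef
  set B : ℝ → ℝ := fun w => deriv ψ w / Real.sqrt ((deriv ψ w) ^ 2 + (deriv φ w) ^ 2)
    with hBdef
  have hreg' : ∀ w ∈ I, 0 < Real.sqrt ((deriv ψ w) ^ 2 + (deriv φ w) ^ 2) :=
    fun w hw => Real.sqrt_pos.2 (hreg w hw)
  have hQpos : 0 < Real.sqrt ((deriv ψ v) ^ 2 + (deriv φ v) ^ 2) := hreg' v hp
  have hQne : Real.sqrt ((deriv ψ v) ^ 2 + (deriv φ v) ^ 2) ≠ 0 := hQpos.ne'
  have hsq : Real.sqrt ((deriv ψ v) ^ 2 + (deriv φ v) ^ 2) ^ 2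
      = (deriv ψ v) ^ 2 + (deriv φ v) ^ 2 := Real.sq_sqrt (hreg v hp).le
  have hdA : ∀ w ∈ I, DifferentiableAt ℝ A w := by
    intro w hw
    have h1 : DifferentiableAt ℝ (deriv ψ) w :=
      (hψ1.contDiffAt (hI.mem_nhds hw)).differentiableAt (by simp)
    have h2 : DifferentiableAt ℝ (deriv φ) w :=
      (hφ1.contDiffAt (hI.mem_nhds hw)).differentiableAt (by simp)
    exact h2.div (DifferentiableAt.sqrt ((h1.pow 2).add (h2.pow 2)) (hreg w hw).ne')
      (hreg' w hw).ne'
  have hdB : ∀ w ∈ I, DifferentiableAt ℝ B w := by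
    intro w hw
    have h1 : DifferentiableAt ℝ (deriv ψ) w :=
      (hψ1.contDiffAt (hI.mem_nhds hw)).differentiableAt (by simp)
    have h2 : DifferentiableAt ℝ (deriv φ) w :=
      (hφ1.contDiffAt (hI.mem_nhds hw)).differentiableAt (by simp)
    exact h1.div (DifferentiableAt.sqrt ((h1.pow 2).add (h2.pow 2)) (hreg w hw).ne')
      (hreg' w hw).ne'
  have hAv : A v = deriv φ v / Real.sqrt ((deriv ψ v) ^ 2 + (deriv φ v) ^ 2) := rfl
  have hBv : B v = deriv ψ v / Real.sqrt ((deriv ψ v) ^ 2 + (deriv φ v) ^ 2) := rfl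
  -- key identity: φ' A' + ψ' B' = 0
  have hone : ∀ w ∈ I, A w ^ 2 + B w ^ 2 = 1 := by
    intro w hw
    have hsqw : Real.sqrt ((deriv ψ w) ^ 2 + (deriv φ w) ^ 2) ^ 2
        = (deriv ψ w) ^ 2 + (deriv φ w) ^ 2 := Real.sq_sqrt (hreg w hw).le
    simp only [hAdef, hBdef, div_pow, hsqw]
    rw [← add_div, add_comm, div_self (hreg w hw).ne']
  have hderiv0 : deriv (fun w => A w ^ 2 + B w ^ 2) v = 0 := by
    have h : (fun w => A w ^ 2 + B w ^ 2) =ᶠ[nhds v] fun _ => (1 : ℝ) :=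
      Filter.eventuallyEq_of_mem hIv hone
    rw [h.deriv_eq]
    simp
  have hderivAB : HasDerivAt (fun w => A w ^ 2 + B w ^ 2)
      (2 * A v ^ 1 * deriv A v + 2 * B v ^ 1 * deriv B v) v :=
    (((hdA v hp).hasDerivAt.pow 2).add ((hdB v hp).hasDerivAt.pow 2))
  have hkey : deriv φ v * deriv A v + deriv ψ v * deriv B v = 0 := by
    have h0 : 2 * A v ^ 1 * deriv A v + 2 * B v ^ 1 * deriv B v = 0 := by
      rw [← hderivAB.deriv]; exact hderiv0
    rw [hAv, hBv] at h0
    field_simp at h0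
    linarith [h0]
  -- fderivs of r
  obtain ⟨hr1, hr2⟩ := rev_fderiv ψ ψ φ u v (deriv ψ v) (deriv ψ v) (deriv φ v)
    hψv hψv hφv r hr
  -- fderivs of ν
  obtain ⟨hν1, hν2⟩ := rev_fderiv A A (fun w => -B w) u v (deriv A v) (deriv A v)
    (-(deriv B v)) (hdA v hp).hasDerivAt (hdA v hp).hasDerivAt (hdB v hp).hasDerivAt.neg ν
    (by
      intro q
      rw [hν q]
      funext i
      fin_cases i <;>
        simp [hAdef, hBdef, Matrix.smul_cons, Matrix.smul_empty] <;> ring)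
  have hνv := hν (u, v)
  have hsc : Real.sin u ^ 2 + Real.cos u ^ 2 = 1 := Real.sin_sq_add_cos_sq u
  have hψp : ψ v ≠ 0 := (hψpos v hp).ne'
  -- the two scalar identities for the cross-product equation
  have e1 : K v * (ψ v * deriv φ v) = -(A v * deriv B v) := by
    rw [hK, hAv]
    field_simp
    linear_combination (deriv φ v * deriv ψ v) * hkey +
      (deriv φ v * deriv B v) * hsq
  have e2 : K v * (ψ v * deriv ψ v) = A v * deriv A v := by
    rw [hK, hAv]
    field_simp
    linear_combination (-(deriv φ v ^ 2)) * hkey +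
      (-(deriv φ v * deriv A v)) * hsq
  refine ⟨?_, ?_, ?_, ?_⟩
  · rw [hνv, hr1]
    simp only [dot3, Matrix.smul_cons, Matrix.smul_empty, Matrix.cons_val_zero,
      Matrix.cons_val_one, Matrix.head_cons, Matrix.cons_val_two, Matrix.tail_cons,
      smul_eq_mul]
    ring
  · rw [hνv, hr2]
    simp only [dot3, Matrix.smul_cons, Matrix.smul_empty, Matrix.cons_val_zero,
      Matrix.cons_val_one, Matrix.head_cons, Matrix.cons_val_two, Matrix.tail_cons,
      smul_eq_mul]
    linear_combination (Real.sqrt ((deriv ψ v) ^ 2 + (deriv φ v) ^ 2))⁻¹ *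
      deriv φ v * deriv ψ v * hsc
  · rw [norm3, hνv]
    have hd : dot3 ((Real.sqrt ((deriv ψ v) ^ 2 + (deriv φ v) ^ 2))⁻¹ •
        ![deriv φ v * Real.cos u, deriv φ v * Real.sin u, -deriv ψ v])
        ((Real.sqrt ((deriv ψ v) ^ 2 + (deriv φ v) ^ 2))⁻¹ •
        ![deriv φ v * Real.cos u, deriv φ v * Real.sin u, -deriv ψ v]) = 1 := by
      simp only [dot3, Matrix.smul_cons, Matrix.smul_empty, Matrix.cons_val_zero,
        Matrix.cons_val_one, Matrix.head_cons, Matrix.cons_val_two, Matrix.tail_cons,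
        smul_eq_mul]
      field_simp [(hreg v hp).ne']
      linear_combination (-1 : ℝ) * hsq + deriv φ v ^ 2 * hsc
    rw [hd]
    exact Real.sqrt_one
  · rw [hν1, hν2, hr1, hr2]
    funext i
    fin_cases i <;> simp [cross3]
    · linear_combination (-Real.cos u) * e1
    · linear_combination (-Real.sin u) * e1
    · linear_combination (Real.sin u ^ 2 + Real.cos u ^ 2) * e2
end

section
/- Define f : ℝ → ℝ by f(v) := sech(v) · tanh(v). Then f(0) = 0 and f(v)² + sech(v) · f'(v) − sech⁴(v) = 0 for all v ∈ ℝ; likewise g := −f satisfies g(0) = 0 and g(v)² − sech(v) · g'(v) − sech⁴(v) = 0. -/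
/-!
Since `sech' = -sech · tanh` and `tanh' = sech²`, the derivative of `f = sech · tanh` is
`sech³ - sech · tanh²`, and `f² + sech · f' - sech⁴` vanishes as a polynomial identity in
`sech` and `tanh`. Replacing `f` by `-f` flips the sign of the derivative term.
-/

open Real

theorem Real.hasDerivAt_inv_cosh (x : ℝ) :
    HasDerivAt (fun y => (cosh y)⁻¹) (-(cosh x)⁻¹ * tanh x) x := by
  refine ((hasDerivAt_cosh x).inv (cosh_pos x).ne').congr_deriv ?_
  rw [tanh_eq_sinh_div_cosh]
  ring

theorem Real.hasDerivAt_tanh (x : ℝ) : HasDerivAt tanh ((cosh x)⁻¹ ^ 2) x := by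
  have h := (hasDerivAt_sinh x).div (hasDerivAt_cosh x) (cosh_pos x).ne'
  rw [show sinh / cosh = tanh from funext fun y => (tanh_eq_sinh_div_cosh y).symm] at h
  refine h.congr_deriv ?_
  linear_combination (cosh x)⁻¹ ^ 2 * cosh_sq_sub_sinh_sq x

theorem hasDerivAt_inv_cosh_mul_tanh (x : ℝ) :
    HasDerivAt (fun y => (cosh y)⁻¹ * tanh y) ((cosh x)⁻¹ ^ 3 - (cosh x)⁻¹ * tanh x ^ 2) x := by
  refine ((hasDerivAt_inv_cosh x).mul (hasDerivAt_tanh x)).congr_deriv ?_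
  ring

theorem catenoid_character_riccati
    (f g : ℝ → ℝ)
    (hf : ∀ v, f v = (Real.cosh v)⁻¹ * Real.tanh v)
    (hg : ∀ v, g v = -f v) :
    f 0 = 0 ∧
    (∀ v : ℝ, (f v) ^ 2 + (Real.cosh v)⁻¹ * deriv f v - ((Real.cosh v)⁻¹) ^ 4 = 0) ∧
    g 0 = 0 ∧
    (∀ v : ℝ, (g v) ^ 2 - (Real.cosh v)⁻¹ * deriv g v - ((Real.cosh v)⁻¹) ^ 4 = 0) := by
  have hf_deriv (v : ℝ) : deriv f v = (cosh v)⁻¹ ^ 3 - (cosh v)⁻¹ * tanh v ^ 2 := by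
    rw [funext hf]
    exact (hasDerivAt_inv_cosh_mul_tanh v).deriv
  have hg_eq : g = -f := funext hg
  refine ⟨by simp [hf], fun v => ?_, by simp [hg, hf], fun v => ?_⟩
  · rw [hf_deriv, hf]
    ring
  · rw [hg_eq, deriv.neg, Pi.neg_apply, hf_deriv, hf]
    ring
end
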